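/- arXiv:1809.08611 — 2 statements merged into one kernel-verified Lean document; each statement's English description precedes it below -/
import Mathlib

section
/- For every measure μ on X, the set F of all measurable functions f : X → [0,∞] such that ∫⁻ f dμ = ⨅ {∫⁻ w dμ : w ∈ ℰ, f ≤ w pointwise} is a convex cone which is closed under countable sums; that is: the zero function belongs to F; if f ∈ F and c ∈ (0,∞) then c·f ∈ F; and if (fₙ)_{n∈ℕ} is a sequence of functions in F, then the pointwise sum Σₙ fₙ belongs to F. -/
/-!
Excessive functions form a cone closed under countable sums: for a sum the supremum over
`t > 0` commutes with the series because each `t ↦ ∫⁻ w d(P t x)` is antitone (by the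
semigroup property), so the suprema are directed. Hence `f ↦ ⨅ {∫⁻ w dμ : w excessive, f ≤ w}` is
positively homogeneous and countably subadditive, and since it always dominates `∫⁻ f dμ`,
which is itself homogeneous and countably additive, equality with `∫⁻ f dμ` is preserved.
-/

open MeasureTheory
open scoped ENNReal

/-- A function `w : X → [0,∞]` is excessive for the semigroup `(P t)_{t>0}` if it is
measurable, supermedian (`∫⁻ w d(P t x) ≤ w x` for all `t > 0`), and
`⨆_{t>0} ∫⁻ w d(P t x) = w x` for all `x`. -/
def Excessive {X : Type*} [MeasurableSpace X] (P : ℝ → ProbabilityTheory.Kernel X X)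
    (w : X → ℝ≥0∞) : Prop :=
  Measurable w ∧ (∀ t : ℝ, 0 < t → ∀ x : X, ∫⁻ y, w y ∂(P t x) ≤ w x) ∧
    ∀ x : X, (⨆ (t : ℝ) (_ : 0 < t), ∫⁻ y, w y ∂(P t x)) = w x

lemma ENNReal.tsum_iSup_of_directed {α ι : Type*} {f : α → ι → ℝ≥0∞}
    (hf : ∀ i j, ∃ k, ∀ a, f a i ≤ f a k ∧ f a j ≤ f a k) :
    ∑' a, ⨆ i, f a i = ⨆ i, ∑' a, f a i := by
  simp_rw [ENNReal.tsum_eq_iSup_sum, ENNReal.finsetSum_iSup hf]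
  exact iSup_comm

section

variable {X : Type*} [MeasurableSpace X] {P : ℝ → ProbabilityTheory.Kernel X X}

def IsKernelSemigroup (P : ℝ → ProbabilityTheory.Kernel X X) : Prop :=
  ∀ s t : ℝ, 0 < s → 0 < t → ∀ f : X → ℝ≥0∞, Measurable f → ∀ x : X,
    ∫⁻ y, f y ∂(P (s + t) x) = ∫⁻ y, ∫⁻ z, f z ∂(P t y) ∂(P s x)

namespace Excessive

variable {w : X → ℝ≥0∞}

theorem measurable (hw : Excessive P w) : Measurable w := hw.1

theorem lintegral_le (hw : Excessive P w) {t : ℝ} (ht : 0 < t) (x : X) :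
    ∫⁻ y, w y ∂(P t x) ≤ w x :=
  hw.2.1 t ht x

theorem iSup_lintegral (hw : Excessive P w) (x : X) :
    ⨆ (t : ℝ) (_ : 0 < t), ∫⁻ y, w y ∂(P t x) = w x :=
  hw.2.2 x

theorem zero : Excessive P (fun _ => (0 : ℝ≥0∞)) := by
  refine ⟨measurable_const, ?_, ?_⟩ <;> simp

theorem const_mul (hw : Excessive P w) (c : ℝ≥0∞) : Excessive P (fun x => c * w x) := by
  refine ⟨hw.measurable.const_mul c, fun t ht x => ?_, fun x => ?_⟩
  · rw [lintegral_const_mul c hw.measurable]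
    exact mul_le_mul_right (hw.lintegral_le ht x) c
  · simp_rw [lintegral_const_mul c hw.measurable, ← ENNReal.mul_iSup, hw.iSup_lintegral x]

theorem lintegral_antitoneOn (hP : IsKernelSemigroup P) (hw : Excessive P w) (x : X) :
    AntitoneOn (fun t => ∫⁻ y, w y ∂(P t x)) (Set.Ioi 0) := by
  intro s hs t _ hst
  rcases hst.eq_or_lt with rfl | hlt
  · rfl
  · calc ∫⁻ y, w y ∂(P t x) = ∫⁻ y, ∫⁻ z, w z ∂(P (t - s) y) ∂(P s x) := by
          rw [← hP s (t - s) hs (sub_pos.2 hlt) w hw.measurable x, add_sub_cancel]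
      _ ≤ ∫⁻ y, w y ∂(P s x) := lintegral_mono fun y => hw.lintegral_le (sub_pos.2 hlt) y

theorem tsum {ι : Type*} [Countable ι] (hP : IsKernelSemigroup P) {w : ι → X → ℝ≥0∞}
    (hw : ∀ i, Excessive P (w i)) : Excessive P (fun x => ∑' i, w i x) := by
  have hint : ∀ t x, ∫⁻ y, ∑' i, w i y ∂(P t x) = ∑' i, ∫⁻ y, w i y ∂(P t x) :=
    fun t x => lintegral_tsum fun i => (hw i).measurable.aemeasurable
  refine ⟨.tsum fun i => (hw i).measurable, fun t ht x => ?_, fun x => ?_⟩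
  · rw [hint]
    exact ENNReal.tsum_le_tsum fun i => (hw i).lintegral_le ht x
  · have hdir : ∀ s t : {t : ℝ // 0 < t}, ∃ r : {t : ℝ // 0 < t}, ∀ i,
        ∫⁻ y, w i y ∂(P s x) ≤ ∫⁻ y, w i y ∂(P r x) ∧
          ∫⁻ y, w i y ∂(P t x) ≤ ∫⁻ y, w i y ∂(P r x) := by
      rintro ⟨s, hs⟩ ⟨t, ht⟩
      have hr : (0 : ℝ) < min s t := lt_min hs ht
      exact ⟨⟨min s t, hr⟩, fun i =>
        ⟨(hw i).lintegral_antitoneOn hP x hr hs (min_le_left s t),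
          (hw i).lintegral_antitoneOn hP x hr ht (min_le_right s t)⟩⟩
    simp_rw [hint, iSup_subtype', ← ENNReal.tsum_iSup_of_directed hdir]
    exact tsum_congr fun i => (iSup_subtype' ..).symm.trans ((hw i).iSup_lintegral x)

end Excessive

noncomputable def excessiveUpperIntegral (P : ℝ → ProbabilityTheory.Kernel X X) (μ : Measure X)
    (f : X → ℝ≥0∞) : ℝ≥0∞ :=
  ⨅ (w : X → ℝ≥0∞) (_ : Excessive P w) (_ : ∀ x, f x ≤ w x), ∫⁻ x, w x ∂μ

variable {μ : Measure X}

theorem lintegral_le_excessiveUpperIntegral (f : X → ℝ≥0∞) :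
    ∫⁻ x, f x ∂μ ≤ excessiveUpperIntegral P μ f :=
  le_iInf₂ fun _ _ => le_iInf fun hfw => lintegral_mono hfw

theorem excessiveUpperIntegral_le_lintegral {f w : X → ℝ≥0∞} (hw : Excessive P w) (hfw : f ≤ w) :
    excessiveUpperIntegral P μ f ≤ ∫⁻ x, w x ∂μ :=
  iInf₂_le_of_le w hw (iInf_le _ hfw)

theorem excessiveUpperIntegral_zero : excessiveUpperIntegral P μ (fun _ => 0) = 0 :=
  nonpos_iff_eq_zero.1 <| (excessiveUpperIntegral_le_lintegral Excessive.zero le_rfl).trans_eq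
    lintegral_zero

theorem excessiveUpperIntegral_const_mul_le {c : ℝ≥0∞} (hc₀ : c ≠ 0) (hc : c ≠ ⊤)
    (f : X → ℝ≥0∞) :
    excessiveUpperIntegral P μ (fun x => c * f x) ≤ c * excessiveUpperIntegral P μ f := by
  simp_rw [excessiveUpperIntegral, ENNReal.mul_iInf_of_ne hc₀ hc]
  refine le_iInf₂ fun w hw => le_iInf fun hfw => ?_
  rw [← lintegral_const_mul c hw.measurable]
  exact excessiveUpperIntegral_le_lintegral (hw.const_mul c) fun x => mul_le_mul_right (hfw x) c

theorem excessiveUpperIntegral_tsum_le {ι : Type*} [Countable ι] (hP : IsKernelSemigroup P)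
    (f : ι → X → ℝ≥0∞) :
    excessiveUpperIntegral P μ (fun x => ∑' i, f i x) ≤ ∑' i, excessiveUpperIntegral P μ (f i) := by
  refine ENNReal.le_of_forall_pos_le_add fun ε hε hfin => ?_
  obtain ⟨δ, hδ, hδε⟩ := ENNReal.exists_pos_sum_of_countable (ENNReal.coe_ne_zero.2 hε.ne') ι
  have hmajorant : ∀ i, ∃ w, Excessive P w ∧ (∀ x, f i x ≤ w x) ∧
      ∫⁻ x, w x ∂μ < excessiveUpperIntegral P μ (f i) + δ i := by
    intro i
    have hlt := ENNReal.lt_add_right (ENNReal.ne_top_of_tsum_ne_top hfin.ne i)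
      (ENNReal.coe_ne_zero.2 (hδ i).ne')
    simpa only [excessiveUpperIntegral, iInf_lt_iff, exists_prop] using hlt
  choose w hw hfw hwlt using hmajorant
  calc excessiveUpperIntegral P μ (fun x => ∑' i, f i x)
      ≤ ∫⁻ x, ∑' i, w i x ∂μ := excessiveUpperIntegral_le_lintegral (Excessive.tsum hP hw)
        fun x => ENNReal.tsum_le_tsum fun i => hfw i x
    _ = ∑' i, ∫⁻ x, w i x ∂μ := lintegral_tsum fun i => (hw i).measurable.aemeasurable
    _ ≤ ∑' i, (excessiveUpperIntegral P μ (f i) + δ i) :=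
        ENNReal.tsum_le_tsum fun i => (hwlt i).le
    _ ≤ ∑' i, excessiveUpperIntegral P μ (f i) + ε := by
        rw [ENNReal.tsum_add]
        exact add_le_add_right hδε.le _

end

/-- For every measure `μ`, the set `F` of all measurable functions `f : X → [0,∞]` such that
`∫⁻ f dμ = ⨅ {∫⁻ w dμ : w excessive, f ≤ w}` contains the zero function, is closed under
multiplication by constants `c ∈ (0,∞)`, and is closed under countable sums. -/
theorem excessive_approx_set_convexCone_countable_sums
    {X : Type*} [MeasurableSpace X] (P : ℝ → ProbabilityTheory.Kernel X X)
    (hsemigroup : ∀ s t : ℝ, 0 < s → 0 < t → ∀ f : X → ℝ≥0∞, Measurable f → ∀ x : X,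
      ∫⁻ y, f y ∂(P (s + t) x) = ∫⁻ y, ∫⁻ z, f z ∂(P t y) ∂(P s x))
    (μ : Measure X)
    (F : Set (X → ℝ≥0∞))
    (hF : F = {f | Measurable f ∧
      ∫⁻ x, f x ∂μ =
        ⨅ (w : X → ℝ≥0∞) (_ : Excessive P w) (_ : ∀ x, f x ≤ w x), ∫⁻ x, w x ∂μ}) :
    (fun _ : X => (0 : ℝ≥0∞)) ∈ F ∧
    (∀ f ∈ F, ∀ c : ℝ≥0∞, 0 < c → c ≠ ⊤ → (fun x => c * f x) ∈ F) ∧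
    (∀ f : ℕ → X → ℝ≥0∞, (∀ n, f n ∈ F) → (fun x => ∑' n, f n x) ∈ F) := by
  subst hF
  refine ⟨⟨measurable_const, lintegral_zero.trans excessiveUpperIntegral_zero.symm⟩, ?_, ?_⟩
  · rintro f ⟨hfm, hf⟩ c hc₀ hc
    refine ⟨hfm.const_mul c, le_antisymm (lintegral_le_excessiveUpperIntegral _) ?_⟩
    calc excessiveUpperIntegral P μ (fun x => c * f x)
        ≤ c * excessiveUpperIntegral P μ f := excessiveUpperIntegral_const_mul_le hc₀.ne' hc f
      _ = ∫⁻ x, c * f x ∂μ := by rw [lintegral_const_mul c hfm, hf]; rfl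
  · intro f hf
    have hfm : ∀ n, Measurable (f n) := fun n => (hf n).1
    refine ⟨.tsum hfm, le_antisymm (lintegral_le_excessiveUpperIntegral _) ?_⟩
    calc excessiveUpperIntegral P μ (fun x => ∑' n, f n x)
        ≤ ∑' n, excessiveUpperIntegral P μ (f n) := excessiveUpperIntegral_tsum_le hsemigroup f
      _ = ∑' n, ∫⁻ x, f n x ∂μ := tsum_congr fun n => (hf n).2.symm
      _ = ∫⁻ x, ∑' n, f n x ∂μ := (lintegral_tsum fun n => (hfm n).aemeasurable).symm
end

section
/- Suppose there are a ∈ (0,∞) and η ∈ (0,1) and a measurable function h : X → [0,∞] such that a ≤ h(x) for all x ∈ X, ∫⁻ h dQ(x) ≤ η·h(x) for all x ∈ X, and ∫⁻ h dK(x) ≤ h(x) for all x ∈ X. Then: (i) for every n ∈ ℕ and x ∈ X, ∫⁻ h d(Qⁿ x) ≤ ηⁿ·h(x), where Qⁿ denotes the n-fold composition of the kernel Q (with Q⁰ the identity kernel); and (ii) for every x ∈ X, Σ_{n=0}^∞ ∫⁻ (fun y => (Qⁿ y)(X)) dK(x) ≤ h(x) / (a·(1−η)); in particular this sum is finite whenever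 h(x) < ∞. -/
/-!
Iterating the drift condition `Q h ≤ η h` gives `Qⁿ h ≤ ηⁿ h`. Since `h ≥ a`, the mass of `Qⁿ y`
is at most `ηⁿ h(y) / a`; integrating against `K x` (where `K h ≤ h`) and summing the geometric
series yields `h(x) / (a (1 - η))`.
-/

open MeasureTheory ProbabilityTheory
open scoped ENNReal

noncomputable def kernelPow {X : Type*} [MeasurableSpace X] (Q : Kernel X X) :
    ℕ → Kernel X X
  | 0 => Kernel.id
  | n + 1 => Q ∘ₖ kernelPow Q n

theorem ENNReal.tsum_le_of_le_geometric {f : ℕ → ℝ≥0∞} {c b : ℝ≥0∞}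
    (hf : ∀ n, f n ≤ c ^ n * b) : ∑' n, f n ≤ (1 - c)⁻¹ * b :=
  calc ∑' n, f n ≤ ∑' n, c ^ n * b := ENNReal.tsum_le_tsum hf
    _ = (1 - c)⁻¹ * b := by rw [ENNReal.tsum_mul_right, ENNReal.tsum_geometric]

theorem MeasureTheory.measure_univ_le_lintegral_div {X : Type*} [MeasurableSpace X]
    (μ : Measure X) {a : ℝ≥0∞} {h : X → ℝ≥0∞} (ha0 : a ≠ 0) (ha : a ≠ ∞)
    (hah : ∀ x, a ≤ h x) : μ Set.univ ≤ (∫⁻ x, h x ∂μ) / a := by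
  rw [ENNReal.le_div_iff_mul_le (.inl ha0) (.inl ha), mul_comm, ← lintegral_const]
  exact lintegral_mono hah

section kernelPow

variable {X : Type*} [MeasurableSpace X] {Q : Kernel X X} {c : ℝ≥0∞} {h : X → ℝ≥0∞}

theorem lintegral_kernelPow_le (hh : Measurable h) (hQ : ∀ x, ∫⁻ y, h y ∂(Q x) ≤ c * h x)
    (n : ℕ) (x : X) : ∫⁻ y, h y ∂(kernelPow Q n x) ≤ c ^ n * h x := by
  induction n generalizing x with
  | zero => simp [kernelPow, Kernel.id_apply, lintegral_dirac' _ hh]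
  | succ n ih =>
    calc ∫⁻ y, h y ∂(kernelPow Q (n + 1) x)
        = ∫⁻ y, ∫⁻ z, h z ∂(Q y) ∂(kernelPow Q n x) := Kernel.lintegral_comp _ _ _ hh
      _ ≤ ∫⁻ y, c * h y ∂(kernelPow Q n x) := lintegral_mono hQ
      _ = c * ∫⁻ y, h y ∂(kernelPow Q n x) := lintegral_const_mul _ hh
      _ ≤ c * (c ^ n * h x) := by gcongr; exact ih x
      _ = c ^ (n + 1) * h x := by ring

theorem kernelPow_apply_univ_le {a : ℝ≥0∞} (ha0 : a ≠ 0) (ha : a ≠ ∞) (hah : ∀ x, a ≤ h x)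
    (hh : Measurable h) (hQ : ∀ x, ∫⁻ y, h y ∂(Q x) ≤ c * h x) (n : ℕ) (x : X) :
    kernelPow Q n x Set.univ ≤ c ^ n * h x / a :=
  (measure_univ_le_lintegral_div _ ha0 ha hah).trans <|
    ENNReal.div_le_div_right (lintegral_kernelPow_le hh hQ n x) a

theorem lintegral_kernelPow_apply_univ_le {K : Kernel X X} {a : ℝ≥0∞} (ha0 : a ≠ 0)
    (ha : a ≠ ∞) (hah : ∀ x, a ≤ h x) (hh : Measurable h)
    (hQ : ∀ x, ∫⁻ y, h y ∂(Q x) ≤ c * h x) (hK : ∀ x, ∫⁻ y, h y ∂(K x) ≤ h x) (n : ℕ) (x : X) :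
    ∫⁻ y, kernelPow Q n y Set.univ ∂(K x) ≤ c ^ n * (h x / a) :=
  calc ∫⁻ y, kernelPow Q n y Set.univ ∂(K x)
      ≤ ∫⁻ y, c ^ n * a⁻¹ * h y ∂(K x) := lintegral_mono fun y => by
        rw [mul_right_comm, ← div_eq_mul_inv]
        exact kernelPow_apply_univ_le ha0 ha hah hh hQ n y
    _ = c ^ n * a⁻¹ * ∫⁻ y, h y ∂(K x) := lintegral_const_mul _ hh
    _ ≤ c ^ n * a⁻¹ * h x := by gcongr; exact hK x
    _ = c ^ n * (h x / a) := by rw [div_eq_mul_inv]; ring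

end kernelPow

theorem expected_visits_estimate_general
    {X : Type*} [MeasurableSpace X] (K Q : Kernel X X)
    (a η : ℝ≥0∞) (ha0 : 0 < a) (ha : a < ⊤) (hη1 : η < 1)
    (h : X → ℝ≥0∞) (hmeas : Measurable h)
    (hah : ∀ x, a ≤ h x)
    (hQ : ∀ x, ∫⁻ y, h y ∂(Q x) ≤ η * h x)
    (hK : ∀ x, ∫⁻ y, h y ∂(K x) ≤ h x) :
    (∀ (n : ℕ) (x : X), ∫⁻ y, h y ∂(kernelPow Q n x) ≤ η ^ n * h x) ∧
    (∀ x : X,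
      (∑' n : ℕ, ∫⁻ y, kernelPow Q n y Set.univ ∂(K x)) ≤ h x / (a * (1 - η)) ∧
      (h x < ⊤ → (∑' n : ℕ, ∫⁻ y, kernelPow Q n y Set.univ ∂(K x)) < ⊤)) := by
  have hvisits (x : X) :
      (∑' n : ℕ, ∫⁻ y, kernelPow Q n y Set.univ ∂(K x)) ≤ h x / (a * (1 - η)) := by
    calc (∑' n : ℕ, ∫⁻ y, kernelPow Q n y Set.univ ∂(K x))
        ≤ (1 - η)⁻¹ * (h x / a) := ENNReal.tsum_le_of_le_geometric
          (lintegral_kernelPow_apply_univ_le ha0.ne' ha.ne hah hmeas hQ hK · x)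
      _ = h x / (a * (1 - η)) := by
        rw [div_eq_mul_inv, div_eq_mul_inv, ENNReal.mul_inv (.inl ha0.ne') (.inl ha.ne)]
        ring
  have hdenom : a * (1 - η) ≠ 0 := mul_ne_zero ha0.ne' (tsub_pos_of_lt hη1).ne'
  exact ⟨lintegral_kernelPow_le hmeas hQ, fun x =>
    ⟨hvisits x, fun hx => (hvisits x).trans_lt (ENNReal.div_lt_top hx.ne hdenom)⟩⟩

/-- Let `K`, `Q` be kernels on `X`, `a ∈ (0,∞)`, `η ∈ (0,1)` and `h : X → [0,∞]` measurable
with `a ≤ h`, `∫⁻ h dQ(x) ≤ η·h(x)` and `∫⁻ h dK(x) ≤ h(x)` for all `x`.  Then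
(i) `∫⁻ h d(Qⁿ x) ≤ ηⁿ·h(x)` for all `n` and `x`, and
(ii) `∑ₙ ∫⁻ (fun y => (Qⁿ y)(X)) dK(x) ≤ h(x) / (a·(1−η))` for all `x`; in particular this
sum is finite whenever `h x < ∞`. -/
theorem expected_visits_estimate
    {X : Type*} [MeasurableSpace X] (K Q : Kernel X X)
    (a η : ℝ≥0∞) (ha0 : 0 < a) (ha : a < ⊤) (hη0 : 0 < η) (hη1 : η < 1)
    (h : X → ℝ≥0∞) (hmeas : Measurable h)
    (hah : ∀ x, a ≤ h x)
    (hQ : ∀ x, ∫⁻ y, h y ∂(Q x) ≤ η * h x)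
    (hK : ∀ x, ∫⁻ y, h y ∂(K x) ≤ h x) :
    (∀ (n : ℕ) (x : X), ∫⁻ y, h y ∂(kernelPow Q n x) ≤ η ^ n * h x) ∧
    (∀ x : X,
      (∑' n : ℕ, ∫⁻ y, kernelPow Q n y Set.univ ∂(K x)) ≤ h x / (a * (1 - η)) ∧
      (h x < ⊤ → (∑' n : ℕ, ∫⁻ y, kernelPow Q n y Set.univ ∂(K x)) < ⊤)) :=
  expected_visits_estimate_general K Q a η ha0 ha hη1 h hmeas hah hQ hK
end
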